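/- Let F be the Pareto cdf F(x) = 1 − 1/x for x ≥ 1 (and F(x) = 0 for x < 1), and let G be the Pareto cdf G(y) = 1 − 2/y for y ≥ 2 (and G(y) = 0 for y < 2). Then F ≤_st G, and for a DL-coupled pair (X,Y) with joint distribution D_*^{F,G}, the distribution of the sum satisfies P(X + Y ≤ c) = (c + √(c² − 4c) − 4) / (2c) for every c ∈ [4, ∞); in particular ess-inf(X+Y) = 4. -/

import Mathlib

open MeasureTheory Set Filter

noncomputable section

variable {Ω : Type*} [MeasurableSpace Ω]

/-- A cumulative distribution function on `ℝ`. -/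
structure IsCDF (F : ℝ → ℝ) : Prop where
  mono : Monotone F
  right_cont : ∀ x, ContinuousWithinAt F (Set.Ici x) x
  tendsto_atBot : Filter.Tendsto F Filter.atBot (nhds 0)
  tendsto_atTop : Filter.Tendsto F Filter.atTop (nhds 1)

/-- The probability space is atomless. -/
def Atomless (μ : Measure Ω) : Prop :=
  ∀ s : Set Ω, MeasurableSet s → 0 < μ s →
    ∃ t : Set Ω, MeasurableSet t ∧ t ⊆ s ∧ 0 < μ t ∧ μ t < μ s

/-- The distribution function of a random variable. -/
def distFun (μ : Measure Ω) (X : Ω → ℝ) : ℝ → ℝ :=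
  fun x => (μ {ω | X ω ≤ x}).toReal

/-- `X` is a random variable distributed according to `F`. -/
def HasCDF (μ : Measure Ω) (X : Ω → ℝ) (F : ℝ → ℝ) : Prop :=
  Measurable X ∧ ∀ x, distFun μ X x = F x

/-- Stochastic order `F ≤_st G`, i.e. `G(x) ≤ F(x)` for all `x`. -/
def StOrder (F G : ℝ → ℝ) : Prop := ∀ x, G x ≤ F x

/-- The ordered-coupling set `F^o_2(F,G)`: `X ~ F`, `Y ~ G`, `X ≤ Y` a.s. -/
def OrderedCoupling (μ : Measure Ω) (F G : ℝ → ℝ) (X Y : Ω → ℝ) : Prop :=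
  HasCDF μ X F ∧ HasCDF μ Y G ∧ ∀ᵐ ω ∂μ, X ω ≤ Y ω

/-- The directional lower (DL) coupling distribution function `D_*^{F,G}`. -/
def DLdf (F G : ℝ → ℝ) (x y : ℝ) : ℝ :=
  if y ≤ x then G y else F x - sInf ((fun z => F z - G z) '' Set.Icc x y)

/-- `(X,Y)` is DL-coupled: its joint distribution function is `D_*^{F,G}`. -/
def IsDLCoupled (μ : Measure Ω) (F G : ℝ → ℝ) (X Y : Ω → ℝ) : Prop :=
  ∀ x y : ℝ, (μ {ω | X ω ≤ x ∧ Y ω ≤ y}).toReal = DLdf F G x y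

/-- The Pareto cdf `F(x) = 1 − 1/x` for `x ≥ 1`, `0` otherwise. -/
def paretoF : ℝ → ℝ := fun x => if 1 ≤ x then 1 - 1 / x else 0

/-- The Pareto cdf `G(y) = 1 − 2/y` for `y ≥ 2`, `0` otherwise. -/
def paretoG : ℝ → ℝ := fun y => if 2 ≤ y then 1 - 2 / y else 0

/-!
The gap `Δ = F - G` equals `F` on `(-∞, 2]` and `1 / z` on `[2, ∞)`: it increases and then
decreases, so `D_*(x, y) = F x - min (Δ x) (Δ y)` for `x < y`. Comparing rectangle probabilities
with these values shows that a DL-coupled pair lies almost surely on the curve made of the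
hyperbola `(x - 1) * (y - 1) = 1` over `(1, 2]` and the diagonal `y = x` over `[2, ∞)`.
On that curve `X + Y ≤ c` holds exactly when `r ≤ X ≤ c / 2`, where `r` is the smaller root of
`r ^ 2 - c * r + c = 0`, hence `P(X + Y ≤ c) = F (c / 2) - F r`; and `X + Y ≥ 4` on both branches.
-/

open Topology

lemma paretoF_of_one_le {x : ℝ} (h : 1 ≤ x) : paretoF x = 1 - 1 / x := if_pos h

lemma paretoF_of_lt_one {x : ℝ} (h : x < 1) : paretoF x = 0 := if_neg h.not_ge

lemma paretoG_of_two_le {y : ℝ} (h : 2 ≤ y) : paretoG y = 1 - 2 / y := if_pos h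

lemma paretoG_of_le_two {y : ℝ} (h : y ≤ 2) : paretoG y = 0 := by
  rcases h.lt_or_eq with h | rfl
  · exact if_neg h.not_ge
  · norm_num [paretoG]

lemma paretoF_one : paretoF 1 = 0 := by norm_num [paretoF]

lemma paretoF_two : paretoF 2 = 1 / 2 := by norm_num [paretoF]

lemma paretoF_nonneg (x : ℝ) : 0 ≤ paretoF x := by
  rcases lt_or_ge x 1 with h | h
  · rw [paretoF_of_lt_one h]
  · rw [paretoF_of_one_le h, sub_nonneg, div_le_one (by linarith)]
    exact h

lemma paretoF_monotone : Monotone paretoF := by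
  intro u v huv
  rcases lt_or_ge u 1 with hu | hu
  · rw [paretoF_of_lt_one hu]
    exact paretoF_nonneg v
  · rw [paretoF_of_one_le hu, paretoF_of_one_le (hu.trans huv)]
    gcongr

lemma paretoF_continuousAt {x : ℝ} (hx : 1 < x) : ContinuousAt paretoF x := by
  have hloc : (fun z => 1 - 1 / z) =ᶠ[𝓝 x] paretoF :=
    eventually_of_mem (Ioi_mem_nhds hx) fun z hz => (paretoF_of_one_le (le_of_lt hz)).symm
  exact (continuousAt_const.sub (continuousAt_const.div continuousAt_id (by positivity))).congr hloc

lemma stOrder_paretoF_paretoG : StOrder paretoF paretoG := by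
  intro x
  rcases le_total x 2 with h | h
  · rw [paretoG_of_le_two h]
    exact paretoF_nonneg x
  · rw [paretoG_of_two_le h, paretoF_of_one_le (by linarith)]
    gcongr
    norm_num

lemma paretoF_sub_paretoG_of_le_two {z : ℝ} (h : z ≤ 2) : paretoF z - paretoG z = paretoF z := by
  rw [paretoG_of_le_two h, sub_zero]

lemma paretoF_sub_paretoG_of_two_le {z : ℝ} (h : 2 ≤ z) : paretoF z - paretoG z = 1 / z := by
  rw [paretoF_of_one_le (by linarith), paretoG_of_two_le h]
  ring

lemma sInf_image_Icc_eq_min {α β : Type*} [LinearOrder α] [ConditionallyCompleteLinearOrder β]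
    {f : α → β} {m x y : α} (hmono : MonotoneOn f (Iic m)) (hanti : AntitoneOn f (Ici m))
    (hxy : x ≤ y) : sInf (f '' Icc x y) = min (f x) (f y) := by
  refine IsLeast.csInf_eq ⟨?_, ?_⟩
  · rcases min_choice (f x) (f y) with h | h <;> rw [h]
    exacts [mem_image_of_mem f ⟨le_rfl, hxy⟩, mem_image_of_mem f ⟨hxy, le_rfl⟩]
  · rintro _ ⟨z, ⟨hxz, hzy⟩, rfl⟩
    rcases le_total z m with hz | hz
    · exact (min_le_left _ _).trans (hmono (hxz.trans hz) hz hxz)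
    · exact (min_le_right _ _).trans (hanti hz (hz.trans hzy) hzy)

lemma DLdf_of_le {F G : ℝ → ℝ} {x y : ℝ} (h : y ≤ x) : DLdf F G x y = G y := if_pos h

lemma DLdf_pareto_of_lt {x y : ℝ} (h : x < y) :
    DLdf paretoF paretoG x y =
      paretoF x - min (paretoF x - paretoG x) (paretoF y - paretoG y) := by
  have hmono : MonotoneOn (fun z => paretoF z - paretoG z) (Iic 2) := by
    intro u hu v hv huv
    simp only [paretoF_sub_paretoG_of_le_two hu, paretoF_sub_paretoG_of_le_two hv]
    exact paretoF_monotone huv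
  have hanti : AntitoneOn (fun z => paretoF z - paretoG z) (Ici 2) := by
    intro u (hu : 2 ≤ u) v (hv : 2 ≤ v) huv
    simp only [paretoF_sub_paretoG_of_two_le hu, paretoF_sub_paretoG_of_two_le hv]
    gcongr
  rw [DLdf, if_neg h.not_ge, sInf_image_Icc_eq_min hmono hanti h.le]

lemma DLdf_pareto_two_left {y : ℝ} (h : 2 ≤ y) : DLdf paretoF paretoG 2 y = 1 / 2 - 1 / y := by
  rcases h.eq_or_lt with rfl | h
  · rw [DLdf_of_le le_rfl, paretoG_of_le_two le_rfl, sub_self]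
  · rw [DLdf_pareto_of_lt h, paretoF_sub_paretoG_of_two_le le_rfl,
      paretoF_sub_paretoG_of_two_le h.le, paretoF_two, min_eq_right (by gcongr)]

lemma DLdf_pareto_eq_zero {x y : ℝ} (hx1 : 1 < x) (hx2 : x ≤ 2) (hxy : (x - 1) * (y - 1) ≤ 1) :
    DLdf paretoF paretoG x y = 0 := by
  rcases le_or_gt y x with h | h
  · rw [DLdf_of_le h, paretoG_of_le_two (h.trans hx2)]
  rw [DLdf_pareto_of_lt h, paretoF_sub_paretoG_of_le_two hx2, min_eq_left, sub_self]
  rcases le_total y 2 with hy | hy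
  · rw [paretoF_sub_paretoG_of_le_two hy]
    exact paretoF_monotone h.le
  · rw [paretoF_sub_paretoG_of_two_le hy,
      paretoF_of_one_le hx1.le, sub_le_iff_le_add, div_add_div _ _ (by positivity) (by positivity),
      le_div_iff₀ (by positivity)]
    linarith

section Probability

variable {μ : Measure Ω} [IsFiniteMeasure μ] {X Y : Ω → ℝ}

lemma ae_imp_of_measureReal_inter_eq {s t : Set Ω} (ht : MeasurableSet t)
    (h : μ.real (s ∩ t) = μ.real s) : ∀ᵐ ω ∂μ, ω ∈ s → ω ∈ t := by
  have hdiff : μ.real (s \ t) = 0 := by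
    linarith [measureReal_inter_add_sdiff (μ := μ) (s := s) ht]
  exact ae_le_set.2 ((measureReal_eq_zero_iff).1 hdiff)

lemma ae_le_of_measureReal_strip_eq (hX : Measurable X) (hY : Measurable Y) {a a' b : ℝ}
    (ha : a ≤ a')
    (h : μ.real {ω | X ω ≤ a' ∧ Y ω ≤ b} - μ.real {ω | X ω ≤ a ∧ Y ω ≤ b} =
      μ.real {ω | X ω ≤ a'} - μ.real {ω | X ω ≤ a}) :
    ∀ᵐ ω ∂μ, a < X ω → X ω ≤ a' → Y ω ≤ b := by
  have hstrip : {ω | X ω ≤ a'} \ {ω | X ω ≤ a} ∩ {ω | Y ω ≤ b} =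
      {ω | X ω ≤ a' ∧ Y ω ≤ b} \ {ω | X ω ≤ a ∧ Y ω ≤ b} := by
    ext ω
    simp only [mem_inter_iff, Set.mem_sdiff, mem_ofPred_eq]
    tauto
  have hsub : {ω | X ω ≤ a} ⊆ {ω | X ω ≤ a'} := fun ω (hω : X ω ≤ a) => hω.trans ha
  have hsub_rect : {ω | X ω ≤ a ∧ Y ω ≤ b} ⊆ {ω | X ω ≤ a' ∧ Y ω ≤ b} :=
    fun ω (hω : X ω ≤ a ∧ Y ω ≤ b) => ⟨hω.1.trans ha, hω.2⟩
  have himp := ae_imp_of_measureReal_inter_eq (μ := μ) (s := {ω | X ω ≤ a'} \ {ω | X ω ≤ a})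
    (t := {ω | Y ω ≤ b}) (hY measurableSet_Iic) (by
      rw [hstrip, measureReal_sdiff hsub_rect ((hX measurableSet_Iic).inter (hY measurableSet_Iic)),
        measureReal_sdiff hsub (hX measurableSet_Iic), h])
  filter_upwards [himp] with ω hω hlt hle using hω ⟨hle, hlt.not_ge⟩

lemma measureReal_lt_eq_of_continuousWithinAt {F : ℝ → ℝ}
    (hF : ∀ x, μ.real {ω | X ω ≤ x} = F x) {t : ℝ} (hc : ContinuousWithinAt F (Iio t) t) :
    μ.real {ω | X ω < t} = F t := by
  set u : ℕ → ℝ := fun n => t - 1 / (n + 1)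
  have hut : ∀ n, u n < t := fun n => sub_lt_self t (by positivity)
  have hu : Tendsto u atTop (𝓝[<] t) := by
    refine tendsto_nhdsWithin_iff.2 ⟨?_, Eventually.of_forall hut⟩
    have hlim := (tendsto_const_nhds (x := t)).sub tendsto_one_div_add_atTop_nhds_zero_nat
    rwa [sub_zero] at hlim
  have hunion : ⋃ n, {ω | X ω ≤ u n} = {ω | X ω < t} := by
    ext ω
    simp only [mem_iUnion, mem_ofPred_eq]
    constructor
    · rintro ⟨n, hn⟩
      exact hn.trans_lt (hut n)
    · intro hω
      obtain ⟨n, hn⟩ := ((hu.mono_right nhdsWithin_le_nhds).eventually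
        (Ioi_mem_nhds hω)).exists
      exact ⟨n, le_of_lt hn⟩
  have hmono : Monotone fun n => {ω | X ω ≤ u n} := by
    intro m n hmn ω hω
    refine le_trans hω (sub_le_sub_left ?_ t)
    gcongr
  have hlim := (ENNReal.tendsto_toReal (measure_ne_top μ _)).comp
    (tendsto_measure_iUnion_atTop (μ := μ) hmono)
  rw [hunion] at hlim
  refine tendsto_nhds_unique hlim ?_
  simpa only [Function.comp_def, ← measureReal_def, hF] using hc.tendsto.comp hu

end Probability

lemma essInf_eq_of_ae_le_of_measure_lt_ne_zero {α β : Type*} [MeasurableSpace α]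
    [ConditionallyCompleteLinearOrder β] {μ : Measure α} {f : α → β} {m : β}
    (hle : ∀ᵐ x ∂μ, m ≤ f x) (hlt : ∀ a, m < a → μ {x | f x < a} ≠ 0) : essInf f μ = m := by
  rw [essInf_eq_sSup]
  convert csSup_Iic (a := m)
  ext a
  refine ⟨fun ha => not_lt.1 fun hma => hlt a hma ha, fun ham => ?_⟩
  refine measure_mono_null (fun x hx => ?_) (ae_iff.1 hle)
  exact not_le.2 (lt_of_lt_of_le hx ham)

def paretoDLSupport : Set (ℝ × ℝ) :=
  {p | 1 < p.1 ∧ (p.1 ≤ 2 ∧ (p.1 - 1) * (p.2 - 1) = 1 ∨ 2 ≤ p.1 ∧ p.2 = p.1)}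

/-- Density of `ℚ` turns these countably many constraints, read off from the joint cdf, into
membership in the curve. -/
lemma mem_paretoDLSupport_of_forall_rat {x y : ℝ} (hx : 1 < x) (hxy : x ≤ y)
    (hdiag : ∀ q : ℚ, 2 < (q : ℝ) → 2 < x → x ≤ q → y ≤ q)
    (hlow : ∀ a b : ℚ, 1 < (a : ℝ) → (a : ℝ) ≤ 2 → ((a : ℝ) - 1) * ((b : ℝ) - 1) ≤ 1 →
      ¬ (x ≤ a ∧ y ≤ b))
    (hup : ∀ b : ℚ, 2 < (b : ℝ) → (b : ℝ) / (b - 1) < x → x ≤ 2 → y ≤ b) :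
    (x, y) ∈ paretoDLSupport := by
  refine ⟨hx, ?_⟩
  rcases lt_or_ge 2 x with h2 | h2
  · refine Or.inr ⟨h2.le, le_antisymm (not_lt.1 fun hlt => ?_) hxy⟩
    obtain ⟨q, hxq, hqy⟩ := exists_rat_btwn hlt
    exact (hdiag q (h2.trans hxq) h2 hxq.le).not_gt hqy
  refine Or.inl ⟨h2, le_antisymm (not_lt.1 fun hgt => ?_) (not_lt.1 fun hlt => ?_)⟩
  · -- above the hyperbola: `y` exceeds some rational `b > x / (x - 1)`
    have hx1 : 0 < x - 1 := by linarith
    obtain ⟨b, hb, hby⟩ := exists_rat_btwn (show x / (x - 1) < y by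
      rw [div_lt_iff₀ hx1]; nlinarith)
    have hb2 : 2 < (b : ℝ) := lt_of_le_of_lt (by rw [le_div_iff₀ hx1]; linarith) hb
    have hbx : (b : ℝ) / (b - 1) < x := by
      rw [div_lt_iff₀ (by linarith)]
      rw [div_lt_iff₀ hx1] at hb
      linarith
    exact (hup b hb2 hbx h2).not_gt hby
  · -- below the hyperbola: `(x, y)` lies in a rational rectangle of zero mass
    have hx1 : 0 < x - 1 := by linarith
    have hx2 : x < 2 := lt_of_le_of_ne h2 fun h => by subst h; nlinarith
    obtain ⟨b, hyb, hb⟩ := exists_rat_btwn (show y < x / (x - 1) by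
      rw [lt_div_iff₀ hx1]; nlinarith)
    have hb1 : 0 < (b : ℝ) - 1 := by linarith
    obtain ⟨a, hxa, ha⟩ := exists_rat_btwn (lt_min hx2 (show x < (b : ℝ) / (b - 1) by
      rw [lt_div_iff₀ hb1]
      rw [lt_div_iff₀ hx1] at hb
      linarith))
    have hab : (a : ℝ) ≤ b / (b - 1) := ha.le.trans (min_le_right _ _)
    rw [le_div_iff₀ hb1] at hab
    exact hlow a b (hx.trans hxa) (ha.le.trans (min_le_left _ _)) (by linarith) ⟨hxa.le, hyb.le⟩

theorem ae_mem_paretoDLSupport {μ : Measure Ω} [IsProbabilityMeasure μ] {X Y : Ω → ℝ}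
    (hXY : OrderedCoupling μ paretoF paretoG X Y) (hDL : IsDLCoupled μ paretoF paretoG X Y) :
    ∀ᵐ ω ∂μ, (X ω, Y ω) ∈ paretoDLSupport := by
  obtain ⟨⟨hXm, hF⟩, ⟨hYm, -⟩, hle⟩ := hXY
  have hF : ∀ x, μ.real {ω | X ω ≤ x} = paretoF x := hF
  have hDL : ∀ x y, μ.real {ω | X ω ≤ x ∧ Y ω ≤ y} = DLdf paretoF paretoG x y := hDL
  have hgt : ∀ᵐ ω ∂μ, 1 < X ω := by
    simp only [ae_iff, not_lt]
    exact (measureReal_eq_zero_iff).1 (by rw [hF, paretoF_one])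
  have hdiag : ∀ᵐ ω ∂μ, ∀ q : ℚ, 2 < (q : ℝ) → 2 < X ω → X ω ≤ q → Y ω ≤ q := by
    refine ae_all_iff.2 fun q => eventually_imp_distrib_left.2 fun hq => ?_
    refine ae_le_of_measureReal_strip_eq hXm hYm hq.le ?_
    rw [hDL, hDL, hF, hF, DLdf_of_le le_rfl, DLdf_pareto_two_left hq.le, paretoG_of_two_le hq.le,
      paretoF_of_one_le (by linarith), paretoF_two]
    ring
  have hlow : ∀ᵐ ω ∂μ, ∀ a b : ℚ, 1 < (a : ℝ) → (a : ℝ) ≤ 2 →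
      ((a : ℝ) - 1) * ((b : ℝ) - 1) ≤ 1 → ¬ (X ω ≤ a ∧ Y ω ≤ b) := by
    simp only [ae_all_iff, eventually_imp_distrib_left]
    intro a b ha1 ha2 hab
    rw [ae_iff]
    simp only [not_not]
    exact (measureReal_eq_zero_iff).1 (by rw [hDL, DLdf_pareto_eq_zero ha1 ha2 hab])
  have hup : ∀ᵐ ω ∂μ, ∀ b : ℚ, 2 < (b : ℝ) → (b : ℝ) / (b - 1) < X ω → X ω ≤ 2 → Y ω ≤ b := by
    refine ae_all_iff.2 fun b => eventually_imp_distrib_left.2 fun hb => ?_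
    have hb1 : 0 < (b : ℝ) - 1 := by linarith
    have ht1 : 1 < (b : ℝ) / (b - 1) := by rw [lt_div_iff₀ hb1]; linarith
    have ht2 : (b : ℝ) / (b - 1) ≤ 2 := by rw [div_le_iff₀ hb1]; linarith
    have htb : ((b : ℝ) / (b - 1) - 1) * ((b : ℝ) - 1) = 1 := by field_simp; ring
    refine ae_le_of_measureReal_strip_eq hXm hYm ht2 ?_
    rw [hDL, hDL, hF, hF, DLdf_pareto_two_left hb.le, DLdf_pareto_eq_zero ht1 ht2 htb.le,
      paretoF_two, paretoF_of_one_le ht1.le, one_div_div]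
    field_simp
    ring
  filter_upwards [hgt, hle, hdiag, hlow, hup] with ω h1 h2 h3 h4 h5
  exact mem_paretoDLSupport_of_forall_rat h1 h2 h3 h4 h5

lemma four_le_add_of_mem_paretoDLSupport {p : ℝ × ℝ} (hp : p ∈ paretoDLSupport) :
    4 ≤ p.1 + p.2 := by
  obtain ⟨h1, ⟨-, hcurve⟩ | ⟨h2, hdiag⟩⟩ := hp
  · have hsq : (p.1 - 1) * (p.1 + p.2 - 4) = (p.1 - 2) ^ 2 := by linear_combination hcurve
    by_contra! hlt
    nlinarith [sq_nonneg (p.1 - 2), mul_pos (sub_pos.2 h1) (sub_pos.2 hlt)]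
  · linarith

lemma sqrt_sq_sub_four_mul_mem_Ico {c : ℝ} (hc : 4 ≤ c) : √(c ^ 2 - 4 * c) ∈ Ico (c - 4) (c - 2) :=
  ⟨Real.le_sqrt_of_sq_le (by nlinarith), (Real.sqrt_lt' (by linarith)).2 (by nlinarith)⟩

/-- `(c - √(c ^ 2 - 4 * c)) / 2` is the smaller root of `r ^ 2 - c * r + c`, and on the hyperbola
`(x - 1) * (x + y - c) = x ^ 2 - c * x + c`. -/
lemma add_le_iff_of_mem_paretoDLSupport {c : ℝ} (hc : 4 ≤ c) {p : ℝ × ℝ}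
    (hp : p ∈ paretoDLSupport) :
    p.1 + p.2 ≤ c ↔ (c - √(c ^ 2 - 4 * c)) / 2 ≤ p.1 ∧ p.1 ≤ c / 2 := by
  obtain ⟨hs4, hs2⟩ := sqrt_sq_sub_four_mul_mem_Ico hc
  have hsq : √(c ^ 2 - 4 * c) ^ 2 = c ^ 2 - 4 * c := Real.sq_sqrt (by nlinarith)
  set s := √(c ^ 2 - 4 * c)
  obtain ⟨h1, ⟨h2, hcurve⟩ | ⟨h2, hdiag⟩⟩ := hp
  · have hfactor : (p.1 - 1) * (p.1 + p.2 - c) =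
        (p.1 - (c - s) / 2) * (p.1 - (c + s) / 2) := by linear_combination hcurve + hsq / 4
    constructor
    · intro hle
      refine ⟨not_lt.1 fun hlt => ?_, by linarith⟩
      nlinarith [mul_pos (sub_pos.2 hlt) (show 0 < (c + s) / 2 - p.1 by linarith)]
    · rintro ⟨hle, -⟩
      nlinarith [mul_nonneg (sub_nonneg.2 hle) (show 0 ≤ (c + s) / 2 - p.1 by linarith)]
  · rw [hdiag]
    constructor
    · intro hle
      exact ⟨by linarith, by linarith⟩
    · rintro ⟨-, hle⟩
      linarith

lemma measureReal_add_le_of_ae_mem_paretoDLSupport {μ : Measure Ω} [IsProbabilityMeasure μ]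
    {X Y : Ω → ℝ} (hX : HasCDF μ X paretoF) (hS : ∀ᵐ ω ∂μ, (X ω, Y ω) ∈ paretoDLSupport)
    {c : ℝ} (hc : 4 ≤ c) :
    μ.real {ω | X ω + Y ω ≤ c} = (c + √(c ^ 2 - 4 * c) - 4) / (2 * c) := by
  obtain ⟨hXm, hF⟩ := hX
  have hF : ∀ x, μ.real {ω | X ω ≤ x} = paretoF x := hF
  obtain ⟨hs4, hs2⟩ := sqrt_sq_sub_four_mul_mem_Ico hc
  have hsq : √(c ^ 2 - 4 * c) ^ 2 = c ^ 2 - 4 * c := Real.sq_sqrt (by nlinarith)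
  set s := √(c ^ 2 - 4 * c)
  set r := (c - s) / 2 with hr
  have hr1 : 1 < r := by linarith
  have hrc : r ≤ c / 2 := by linarith
  have hevent : {ω | X ω + Y ω ≤ c} =ᵐ[μ] ({ω | X ω ≤ c / 2} \ {ω | X ω < r} : Set Ω) := by
    refine eventuallyEq_set.2 ?_
    filter_upwards [hS] with ω hω
    show X ω + Y ω ≤ c ↔ X ω ≤ c / 2 ∧ ¬ X ω < r
    rw [add_le_iff_of_mem_paretoDLSupport hc hω, not_lt, and_comm]
  have hsub : {ω | X ω < r} ⊆ {ω | X ω ≤ c / 2} := fun ω (h : X ω < r) => h.le.trans hrc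
  rw [measureReal_congr hevent, measureReal_sdiff hsub (hXm measurableSet_Iio), hF,
    measureReal_lt_eq_of_continuousWithinAt hF (paretoF_continuousAt hr1).continuousWithinAt,
    paretoF_of_one_le (by linarith), paretoF_of_one_le hr1.le]
  have hcs : c - s ≠ 0 := by linarith
  rw [hr]
  field_simp
  linear_combination hsq

/-- For the two Pareto distributions, `F ≤_st G`, and for a DL-coupled pair
`(X,Y)` the sum satisfies `P(X+Y ≤ c) = (c + √(c² − 4c) − 4)/(2c)` for
`c ≥ 4`; in particular `ess-inf(X+Y) = 4`. -/
theorem pareto_DL_sum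
    (μ : Measure Ω) [IsProbabilityMeasure μ]
    (X Y : Ω → ℝ) (hXY : OrderedCoupling μ paretoF paretoG X Y)
    (hDL : IsDLCoupled μ paretoF paretoG X Y) :
    StOrder paretoF paretoG ∧
    (∀ c : ℝ, 4 ≤ c →
      (μ {ω | X ω + Y ω ≤ c}).toReal =
        (c + Real.sqrt (c ^ 2 - 4 * c) - 4) / (2 * c)) ∧
    essInf (fun ω => X ω + Y ω) μ = 4 := by
  have hS := ae_mem_paretoDLSupport hXY hDL
  have hsum : ∀ c : ℝ, 4 ≤ c → (μ {ω | X ω + Y ω ≤ c}).toReal =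
      (c + Real.sqrt (c ^ 2 - 4 * c) - 4) / (2 * c) :=
    fun c hc => measureReal_add_le_of_ae_mem_paretoDLSupport hXY.1 hS hc
  refine ⟨stOrder_paretoF_paretoG, hsum, essInf_eq_of_ae_le_of_measure_lt_ne_zero ?_ ?_⟩
  · filter_upwards [hS] with ω hω using four_le_add_of_mem_paretoDLSupport hω
  · intro a ha hnull
    obtain ⟨c, hc4, hca⟩ := exists_between ha
    have hpos : 0 < (c + Real.sqrt (c ^ 2 - 4 * c) - 4) / (2 * c) :=
      div_pos (by linarith [Real.sqrt_nonneg (c ^ 2 - 4 * c)]) (by linarith)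
    have hzero : μ {ω | X ω + Y ω ≤ c} = 0 :=
      measure_mono_null (fun ω (hω : X ω + Y ω ≤ c) => hω.trans_lt (by linarith)) hnull
    rw [← hsum c hc4.le, hzero, ENNReal.toReal_zero] at hpos
    exact hpos.false
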